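/- Let (X, d_X) and (Y, d_Y) be non-Archimedean metric spaces such that every ball in X contains at least two distinct points. Let P ∈ D♭^{(1)}(X, Y) and let {P_n}_{n=1}^∞ be a sequence in D♭(X, Y). Then the following are equivalent: (A) β_{X,Y}(P_n, P) → 0 as n → ∞; (B) sup_{B ∈ M♭(X)} d_Y(P_n(B), P(B)) → 0 as n → ∞, i.e., P_n converges uniformly to P. -/

import Mathlib

open scoped ENNReal

/-- A ball in a metric space: an open or closed ball of positive radius. -/
def IsBall {X : Type*} [MetricSpace X] (B : Set X) : Prop :=
  ∃ (a : X) (r : ℝ), 0 < r ∧ (B = Metric.ball a r ∨ B = Metric.closedBall a r)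

/-- The type `M♭(X)` of all balls of `X`. -/
abbrev BallSet (X : Type*) [MetricSpace X] := {B : Set X // IsBall B}

-- `β^λ_{X,Y}(P₁,P₂)`: zero if `P₁ = P₂`; otherwise the infimum of those `ε > 0` such that
-- `d_Y(P₁(B), P₂(B^{λε})) ≤ ε` and `d_Y(P₂(B), P₁(B^{λε})) ≤ ε` for every ball `B`, where
-- `B^{δ}` denotes the `δ`-neighborhood (thickening) of `B`, which is again a ball.
open Classical in
noncomputable def betaL {X Y : Type*} [MetricSpace X] [MetricSpace Y]
    (lam : ℝ) (P₁ P₂ : BallSet X → Y) : ℝ≥0∞ :=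
  if P₁ = P₂ then 0 else
    sInf {e : ℝ≥0∞ | ∃ ε : ℝ, 0 < ε ∧ e = ENNReal.ofReal ε ∧
      ∀ B : BallSet X, ∃ B' : BallSet X,
        (B' : Set X) = Metric.thickening (lam * ε) (B : Set X) ∧
        edist (P₁ B) (P₂ B') ≤ ENNReal.ofReal ε ∧
        edist (P₂ B) (P₁ B') ≤ ENNReal.ofReal ε}

/-- `β^{*λ}_{X,Y}(P₁,P₂)`: the infimum of those `ε > 0` such that for every ball `B` there
exist positive `ε_B, ε'_B ≤ ε` with `d_Y(P₁(B), P₂(B^{λε_B})) ≤ ε` and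
`d_Y(P₂(B), P₁(B^{λε'_B})) ≤ ε`. -/
noncomputable def betaStarL {X Y : Type*} [MetricSpace X] [MetricSpace Y]
    (lam : ℝ) (P₁ P₂ : BallSet X → Y) : ℝ≥0∞ :=
  sInf {e : ℝ≥0∞ | ∃ ε : ℝ, 0 < ε ∧ e = ENNReal.ofReal ε ∧
    ∀ B : BallSet X, ∃ εB εB' : ℝ, 0 < εB ∧ εB ≤ ε ∧ 0 < εB' ∧ εB' ≤ ε ∧
      ∃ B' B'' : BallSet X,
        (B' : Set X) = Metric.thickening (lam * εB) (B : Set X) ∧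
        (B'' : Set X) = Metric.thickening (lam * εB') (B : Set X) ∧
        edist (P₁ B) (P₂ B') ≤ ENNReal.ofReal ε ∧
        edist (P₂ B) (P₁ B'') ≤ ENNReal.ofReal ε}

/-- `ρ_s(P₁,P₂) = sup_{B ∈ M♭(X)} d_Y(P₁(B), P₂(B))`. -/
noncomputable def rhoSB {X Y : Type*} [MetricSpace X] [MetricSpace Y]
    (P₁ P₂ : BallSet X → Y) : ℝ≥0∞ :=
  ⨆ B : BallSet X, edist (P₁ B) (P₂ B)

/-- `ρ_H(P₁,P₂)`: the Hausdorff distance between the graphs of `P₁` and `P₂` inside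
`W = M♭(X) × Y` with the sup-metric `max (d_{X,H}, d_Y)`, written out via the
`sup-inf` formula for the Hausdorff distance. -/
noncomputable def rhoHB {X Y : Type*} [MetricSpace X] [MetricSpace Y]
    (P₁ P₂ : BallSet X → Y) : ℝ≥0∞ :=
  max
    (⨆ B : BallSet X, ⨅ B' : BallSet X,
      max (EMetric.hausdorffEdist (B : Set X) (B' : Set X)) (edist (P₁ B) (P₂ B')))
    (⨆ B : BallSet X, ⨅ B' : BallSet X,
      max (EMetric.hausdorffEdist (B : Set X) (B' : Set X)) (edist (P₂ B) (P₁ B')))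

/-- Membership in `D♭^{(1)}(X,Y)`: `d_Y(P(B), P(B^ε)) ≤ ε` for all `ε > 0` and all balls `B`. -/
def memDflatOne {X Y : Type*} [MetricSpace X] [MetricSpace Y] (P : BallSet X → Y) : Prop :=
  ∀ ε : ℝ, 0 < ε → ∀ B B' : BallSet X,
    (B' : Set X) = Metric.thickening ε (B : Set X) → edist (P B) (P B') ≤ ENNReal.ofReal ε

/-!
In a non-Archimedean space the `ε`-thickening of a ball is again a ball, so the thickened
balls in the definition of `β` always exist. For `P ∈ D♭^{(1)}` the strong triangle inequality
in `Y` then gives `d(Q B, P B) ≤ max (d(Q B, P B^ε), d(P B^ε, P B))` and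
`d(Q B, P B^ε) ≤ max (d(Q B, P B), d(P B, P B^ε))`, with `d(P B, P B^ε) ≤ ε`. Hence
`β(Q, P)` is exactly the uniform distance `sup_B d(Q B, P B)`, and the two notions of
convergence coincide.
-/

open Metric

namespace IsUltrametricDist

variable {X : Type*} [PseudoMetricSpace X] [IsUltrametricDist X]

theorem edist_triangle_max (x y z : X) : edist x z ≤ max (edist x y) (edist y z) := by
  simp only [edist_dist, ← ENNReal.ofReal_max]
  exact ENNReal.ofReal_le_ofReal (dist_triangle_max x y z)

theorem thickening_ball {a : X} {r ε : ℝ} (hr : 0 < r) (hε : 0 < ε) :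
    thickening ε (ball a r) = ball a (max r ε) := by
  ext x
  simp only [mem_thickening_iff, mem_ball]
  constructor
  · rintro ⟨y, hy, hxy⟩
    exact (dist_triangle_max x y a).trans_lt
      (max_lt (hxy.trans_le (le_max_right _ _)) (hy.trans_le (le_max_left _ _)))
  · intro hx
    rcases lt_or_ge (dist x a) r with hxr | hxr
    · exact ⟨x, hxr, by simpa using hε⟩
    · exact ⟨a, by simpa using hr, (lt_max_iff.mp hx).resolve_left hxr.not_gt⟩

theorem thickening_closedBall_of_le {a : X} {r ε : ℝ} (hε : 0 < ε) (hεr : ε ≤ r) :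
    thickening ε (closedBall a r) = closedBall a r := by
  ext x
  simp only [mem_thickening_iff, mem_closedBall]
  constructor
  · rintro ⟨y, hy, hxy⟩
    exact (dist_triangle_max x y a).trans (max_le (hxy.le.trans hεr) hy)
  · intro hx
    exact ⟨x, hx, by simpa using hε⟩

theorem thickening_closedBall_of_lt {a : X} {r ε : ℝ} (hr : 0 ≤ r) (hrε : r < ε) :
    thickening ε (closedBall a r) = ball a ε := by
  ext x
  simp only [mem_thickening_iff, mem_closedBall, mem_ball]
  constructor
  · rintro ⟨y, hy, hxy⟩
    exact (dist_triangle_max x y a).trans_lt (max_lt hxy (hy.trans_lt hrε))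
  · intro hx
    exact ⟨a, by simpa using hr, hx⟩

end IsUltrametricDist

open IsUltrametricDist

theorem IsBall.thickening {X : Type*} [MetricSpace X] [IsUltrametricDist X] {B : Set X}
    (hB : IsBall B) {ε : ℝ} (hε : 0 < ε) : IsBall (thickening ε B) := by
  obtain ⟨a, r, hr, rfl | rfl⟩ := hB
  · exact ⟨a, max r ε, lt_max_of_lt_left hr, Or.inl (thickening_ball hr hε)⟩
  · rcases le_or_gt ε r with hεr | hrε
    · exact ⟨a, r, hr, Or.inr (thickening_closedBall_of_le hε hεr)⟩
    · exact ⟨a, ε, hε, Or.inl (thickening_closedBall_of_lt hr.le hrε)⟩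

section

variable {X Y : Type*} [MetricSpace X] [MetricSpace Y] [IsUltrametricDist Y]
  {P : BallSet X → Y}

theorem rhoSB_le_betaL_one (hP : memDflatOne P) (Q : BallSet X → Y) :
    rhoSB Q P ≤ betaL 1 Q P := by
  unfold betaL
  split_ifs with hQP
  · simp [rhoSB, hQP]
  refine le_sInf ?_
  rintro _ ⟨ε, hε, rfl, hβ⟩
  refine iSup_le fun B => ?_
  obtain ⟨B', hB', hQB, -⟩ := hβ B
  have hPB : edist (P B') (P B) ≤ ENNReal.ofReal ε :=
    edist_comm (P B) (P B') ▸ hP ε hε B B' (by rwa [one_mul] at hB')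
  exact (edist_triangle_max (Q B) (P B') (P B)).trans (max_le hQB hPB)

theorem betaL_one_le_of_rhoSB_le [IsUltrametricDist X] (hP : memDflatOne P)
    {Q : BallSet X → Y} {ε : ℝ} (hε : 0 < ε) (hQ : rhoSB Q P ≤ ENNReal.ofReal ε) :
    betaL 1 Q P ≤ ENNReal.ofReal ε := by
  have hQB (C : BallSet X) : edist (Q C) (P C) ≤ ENNReal.ofReal ε :=
    (le_iSup (fun C => edist (Q C) (P C)) C).trans hQ
  unfold betaL
  split_ifs
  · exact zero_le
  refine sInf_le ⟨ε, hε, rfl, fun B => ?_⟩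
  let B' : BallSet X := ⟨thickening ε B, B.2.thickening hε⟩
  have hPB : edist (P B) (P B') ≤ ENNReal.ofReal ε := hP ε hε B B' rfl
  refine ⟨B', by rw [one_mul], ?_, ?_⟩
  · exact (edist_triangle_max (Q B) (P B) (P B')).trans (max_le (hQB B) hPB)
  · exact (edist_triangle_max (P B) (P B') (Q B')).trans
      (max_le hPB (edist_comm (Q B') (P B') ▸ hQB B'))

theorem betaL_one_eq_rhoSB [IsUltrametricDist X] (hP : memDflatOne P) (Q : BallSet X → Y) :
    betaL 1 Q P = rhoSB Q P := by
  refine le_antisymm (ENNReal.le_of_forall_pos_le_add fun δ hδ hρ => ?_)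
    (rhoSB_le_betaL_one hP Q)
  have hρδ : rhoSB Q P + δ = ENNReal.ofReal ((rhoSB Q P).toReal + δ) := by
    rw [ENNReal.ofReal_add ENNReal.toReal_nonneg δ.coe_nonneg, ENNReal.ofReal_toReal hρ.ne,
      ENNReal.ofReal_coe_nnreal]
  rw [hρδ]
  exact betaL_one_le_of_rhoSB_le hP (by positivity) (hρδ ▸ le_self_add)

end

theorem stmt_17_general {X Y : Type*} [MetricSpace X] [MetricSpace Y]
    (hnaX : ∀ x y z : X, dist x z ≤ max (dist x y) (dist y z))
    (hnaY : ∀ x y z : Y, dist x z ≤ max (dist x y) (dist y z))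
    (P : BallSet X → Y) (hP : memDflatOne P) (Pn : ℕ → BallSet X → Y) :
    Filter.Tendsto (fun n => betaL 1 (Pn n) P) Filter.atTop (nhds 0) ↔
    Filter.Tendsto (fun n => ⨆ B : BallSet X, edist (Pn n B) (P B))
      Filter.atTop (nhds 0) := by
  have : IsUltrametricDist X := ⟨hnaX⟩
  have : IsUltrametricDist Y := ⟨hnaY⟩
  simp only [betaL_one_eq_rhoSB hP, rhoSB]

theorem stmt_17 {X Y : Type*} [MetricSpace X] [MetricSpace Y]
    (hnaX : ∀ x y z : X, dist x z ≤ max (dist x y) (dist y z))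
    (hnaY : ∀ x y z : Y, dist x z ≤ max (dist x y) (dist y z))
    (hball : ∀ B : Set X, IsBall B → ∃ x ∈ B, ∃ y ∈ B, x ≠ y)
    (P : BallSet X → Y) (hP : memDflatOne P) (Pn : ℕ → BallSet X → Y) :
    Filter.Tendsto (fun n => betaL 1 (Pn n) P) Filter.atTop (nhds 0) ↔
    Filter.Tendsto (fun n => ⨆ B : BallSet X, edist (Pn n B) (P B))
      Filter.atTop (nhds 0) :=
  stmt_17_general hnaX hnaY P hP Pn
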